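/- Let n and l be positive integers. Then for every integer k with 4n + 2l + 2 ≤ k ≤ 4n + 3l + 2, there exists an edge-magic labeling of K_{1,n} ∪ lK_1 with valence k. -/

import Mathlib

/-- `f` is an edge-magic labeling of the graph `G` with valence `k`:
`f` is a bijection from `V(G) ∪ E(G)` onto `{1, …, p + q}` and
`f u + f v + f uv = k` for every edge `uv`. -/
def IsEdgeMagic {V : Type*} [Fintype V] (G : SimpleGraph V)
    (f : V ⊕ G.edgeSet → ℕ) (k : ℕ) : Prop :=
  Set.BijOn f Set.univ (Set.Icc 1 (Fintype.card V + G.edgeSet.ncard)) ∧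
  ∀ u v, ∀ h : G.Adj u v,
    f (Sum.inl u) + f (Sum.inl v) + f (Sum.inr ⟨s(u, v), G.mem_edgeSet.mpr h⟩) = k

/-- `f` is a super edge-magic labeling of `G` with valence `k`: an edge-magic
labeling whose vertex labels are exactly `{1, …, p}`. -/
def IsSuperEdgeMagic {V : Type*} [Fintype V] (G : SimpleGraph V)
    (f : V ⊕ G.edgeSet → ℕ) (k : ℕ) : Prop :=
  IsEdgeMagic G f k ∧ ∀ v, f (Sum.inl v) ∈ Set.Icc 1 (Fintype.card V)

/-- The graph `K_{1,n} ∪ lK_1`: the disjoint union of the star `K_{1,n}`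
(with center `0` and leaves `1, …, n`) and `l` isolated vertices
(`n+1, …, n+l`), on `n + l + 1` vertices. -/
def starUnion (n l : ℕ) : SimpleGraph (Fin (n + l + 1)) where
  Adj u v := (u = 0 ∧ v ≠ 0 ∧ (v : ℕ) ≤ n) ∨ (v = 0 ∧ u ≠ 0 ∧ (u : ℕ) ≤ n)
  symm := ⟨fun u v h => h.symm⟩
  loopless := ⟨fun v h => by rcases h with ⟨h1, h2, _⟩ | ⟨h1, h2, _⟩ <;> exact h2 h1⟩

/-!
An edge-magic labeling with valence `k` is determined by its vertex labels, the edge `uv` being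
forced to carry `k - f u - f v`; so it suffices to find vertex labels for which all these labels
are distinct and lie in `{1, …, p + q}`, and by counting, distinctness is enough.
For `k = 4n + 2l + 2 + t` with `0 ≤ t ≤ l`, give the center the top label `2n + l + 1` and the
leaf `i` the label `i + t`; the edge to leaf `i` then gets `2n + l + 1 - i`, so the edges fill
`{n + l + 1, …, 2n + l}`. The labels `1, …, t` freed by the shift go to the first `t` isolated
vertices, and the other isolated vertices keep their names `n + t + 1, …, n + l` as labels.
-/

theorem Set.bijOn_univ_of_injective {α β : Type*} [Finite α] {f : α → β} {t : Set β}
    (hf : Function.Injective f) (hmaps : ∀ a, f a ∈ t) (hcard : t.ncard = Nat.card α)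
    (ht : t.Finite) : Set.BijOn f Set.univ t := by
  refine ⟨fun a _ => hmaps a, hf.injOn, ?_⟩
  have himage : f '' Set.univ ⊆ t := Set.image_subset_iff.mpr fun a _ => hmaps a
  rw [Set.SurjOn, Set.eq_of_subset_of_ncard_le himage ?_ ht]
  rw [hcard, Set.ncard_image_of_injective _ hf, Set.ncard_univ]

namespace SimpleGraph

variable {V : Type*} (G : SimpleGraph V)

def extendVertexLabeling (lab : V → ℕ) (k : ℕ) : V ⊕ G.edgeSet → ℕ :=
  Sum.elim lab fun e => k - Sym2.lift ⟨fun u v => lab u + lab v, fun _ _ => add_comm _ _⟩ e.1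

variable {G}

@[simp]
theorem extendVertexLabeling_inl (lab : V → ℕ) (k : ℕ) (v : V) :
    G.extendVertexLabeling lab k (Sum.inl v) = lab v := rfl

@[simp]
theorem extendVertexLabeling_inr_mk (lab : V → ℕ) (k : ℕ) (u v : V) (h : s(u, v) ∈ G.edgeSet) :
    G.extendVertexLabeling lab k (Sum.inr ⟨s(u, v), h⟩) = k - (lab u + lab v) := rfl

/-- Positivity of the edge labels (part of the bijectivity) already forces `lab u + lab v < k`,
so the truncated subtraction is exact. -/
theorem isEdgeMagic_extendVertexLabeling_iff [Fintype V] (lab : V → ℕ) (k : ℕ) :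
    IsEdgeMagic G (G.extendVertexLabeling lab k) k ↔
      Set.BijOn (G.extendVertexLabeling lab k) Set.univ
        (Set.Icc 1 (Fintype.card V + G.edgeSet.ncard)) := by
  refine ⟨And.left, fun hbij => ⟨hbij, fun u v h => ?_⟩⟩
  have hpos := (hbij.mapsTo (Set.mem_univ (Sum.inr ⟨s(u, v), G.mem_edgeSet.mpr h⟩))).1
  simp only [extendVertexLabeling_inr_mk] at hpos ⊢
  simp only [extendVertexLabeling_inl]
  omega

end SimpleGraph

section starUnion

variable {n l t : ℕ}

def starUnionEdge (n l : ℕ) (j : Fin n) : Sym2 (Fin (n + l + 1)) :=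
  s(0, ⟨j + 1, by omega⟩)

theorem starUnionEdge_injective : Function.Injective (starUnionEdge n l) := by
  intro i j h
  simpa [starUnionEdge, Fin.ext_iff] using h

theorem starUnion_edgeSet : (starUnion n l).edgeSet = Set.range (starUnionEdge n l) := by
  ext e
  induction e using Sym2.ind with
  | _ u v =>
    simp only [SimpleGraph.mem_edgeSet, starUnion, Set.mem_range, starUnionEdge, Sym2.eq_iff,
      Fin.ext_iff, ne_eq, Fin.val_zero]
    constructor
    · rintro (⟨hu, hv, hvn⟩ | ⟨hv, hu, hun⟩)
      · exact ⟨⟨v - 1, by omega⟩, by simp; omega⟩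
      · exact ⟨⟨u - 1, by omega⟩, by simp; omega⟩
    · rintro ⟨j, ⟨hu, hv⟩ | ⟨hu, hv⟩⟩ <;> omega

theorem starUnion_edgeSet_ncard : (starUnion n l).edgeSet.ncard = n := by
  rw [starUnion_edgeSet, Set.ncard_range_of_injective starUnionEdge_injective, Nat.card_fin]

def starUnionLabel (n l t : ℕ) (v : Fin (n + l + 1)) : ℕ :=
  if (v : ℕ) = 0 then 2 * n + l + 1
  else if (v : ℕ) ≤ n then v + t
  else if (v : ℕ) ≤ n + t then v - n
  else v

theorem exists_extendVertexLabeling_starUnionLabel_inr (e : (starUnion n l).edgeSet) :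
    ∃ j : Fin n, e.1 = starUnionEdge n l j ∧
      (starUnion n l).extendVertexLabeling (starUnionLabel n l t) (4 * n + 2 * l + 2 + t)
        (Sum.inr e) = 2 * n + l - j := by
  obtain ⟨e, he⟩ := e
  obtain ⟨j, rfl⟩ := starUnion_edgeSet ▸ he
  refine ⟨j, rfl, ?_⟩
  simp only [starUnionEdge, SimpleGraph.extendVertexLabeling_inr_mk, starUnionLabel,
    Fin.val_zero, Nat.add_one_ne_zero, if_true, if_false]
  rw [if_pos (by omega)]
  omega

theorem injective_extendVertexLabeling_starUnionLabel (ht : t ≤ l) :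
    Function.Injective ((starUnion n l).extendVertexLabeling (starUnionLabel n l t)
      (4 * n + 2 * l + 2 + t)) := by
  rintro (v | e) (w | e') h
  · simp only [SimpleGraph.extendVertexLabeling_inl, starUnionLabel] at h
    exact congrArg Sum.inl (Fin.ext (by split_ifs at h <;> omega))
  · obtain ⟨j, -, hj⟩ := exists_extendVertexLabeling_starUnionLabel_inr (t := t) e'
    simp only [SimpleGraph.extendVertexLabeling_inl, hj, starUnionLabel] at h
    have := v.isLt
    split_ifs at h <;> omega
  · obtain ⟨j, -, hj⟩ := exists_extendVertexLabeling_starUnionLabel_inr (t := t) e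
    simp only [SimpleGraph.extendVertexLabeling_inl, hj, starUnionLabel] at h
    have := w.isLt
    split_ifs at h <;> omega
  · obtain ⟨i, hi, hie⟩ := exists_extendVertexLabeling_starUnionLabel_inr (t := t) e
    obtain ⟨j, hj, hje⟩ := exists_extendVertexLabeling_starUnionLabel_inr (t := t) e'
    rw [hie, hje] at h
    have hij : i = j := Fin.ext (by omega)
    exact congrArg Sum.inr (Subtype.ext (by rw [hi, hj, hij]))

theorem isEdgeMagic_starUnion_extendVertexLabeling (ht : t ≤ l) :
    IsEdgeMagic (starUnion n l)
      ((starUnion n l).extendVertexLabeling (starUnionLabel n l t) (4 * n + 2 * l + 2 + t))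
      (4 * n + 2 * l + 2 + t) := by
  rw [SimpleGraph.isEdgeMagic_extendVertexLabeling_iff, Fintype.card_fin, starUnion_edgeSet_ncard]
  refine Set.bijOn_univ_of_injective (injective_extendVertexLabeling_starUnionLabel ht)
    (fun x => ?_) ?_ (Set.finite_Icc _ _)
  · rcases x with v | e
    · simp only [SimpleGraph.extendVertexLabeling_inl, starUnionLabel, Set.mem_Icc]
      have := v.isLt
      split_ifs <;> omega
    · obtain ⟨j, -, hj⟩ := exists_extendVertexLabeling_starUnionLabel_inr (t := t) e
      rw [hj, Set.mem_Icc]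
      omega
  · rw [Nat.card_sum, Nat.card_fin, Nat.card_coe_set_eq, starUnion_edgeSet_ncard,
      Set.ncard_Icc_nat]
    omega

end starUnion

theorem stmt_17_general (n l : ℕ) :
    ∀ k : ℕ, 4 * n + 2 * l + 2 ≤ k → k ≤ 4 * n + 3 * l + 2 →
      ∃ f, IsEdgeMagic (starUnion n l) f k := by
  intro k hk hk'
  obtain ⟨t, rfl⟩ := Nat.exists_eq_add_of_le hk
  exact ⟨_, isEdgeMagic_starUnion_extendVertexLabeling (by omega)⟩

/-- Let `n` and `l` be positive integers. Then for every integer `k` with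
`4n + 2l + 2 ≤ k ≤ 4n + 3l + 2` there exists an edge-magic labeling of
`K_{1,n} ∪ lK_1` with valence `k`. -/
theorem stmt_17 (n l : ℕ) (hn : 1 ≤ n) (hl : 1 ≤ l) :
    ∀ k : ℕ, 4 * n + 2 * l + 2 ≤ k → k ≤ 4 * n + 3 * l + 2 →
      ∃ f, IsEdgeMagic (starUnion n l) f k :=
  stmt_17_general n l
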